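/- Suppose T^I ∈ Λ²V* for each I in O = {01,02,03,23,31,12} on a 4-dimensional real vector space V, satisfying T^I ∧ T^J = ε^{IJ} ω for a fixed nonzero ω ∈ Λ⁴V*, where ε^{IJ} = ε^{I₁I₂J₁J₂} is the Levi-Civita symbol. Then T^{01} = ξ⁰ ∧ ξ¹ for some linearly independent ξ⁰, ξ¹ ∈ V*. -/
import Mathlib


open Matrix

noncomputable section

/-- The Levi-Civita permutation symbol on four indices in `{0,1,2,3}`. -/
def eps (i j k l : Fin 4) : ℝ :=
  (((j : ℕ) : ℝ) - ((i : ℕ) : ℝ)) * (((k : ℕ) : ℝ) - ((i : ℕ) : ℝ)) *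
    (((l : ℕ) : ℝ) - ((i : ℕ) : ℝ)) * (((k : ℕ) : ℝ) - ((j : ℕ) : ℝ)) *
    (((l : ℕ) : ℝ) - ((j : ℕ) : ℝ)) * (((l : ℕ) : ℝ) - ((k : ℕ) : ℝ)) / 12

/-- First indices of the ordered pairs `O = {01, 02, 03, 23, 31, 12}`. -/
def p1 : Fin 6 → Fin 4 := ![0, 0, 0, 2, 3, 1]

/-- Second indices of the ordered pairs `O = {01, 02, 03, 23, 31, 12}`. -/
def p2 : Fin 6 → Fin 4 := ![1, 2, 3, 3, 1, 2]

/-- The `6 × 6` matrix `(ε^{IJ})_{I,J ∈ O}` with `ε^{IJ} = ε^{I₁I₂J₁J₂}`. -/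
def Bmat : Matrix (Fin 6) (Fin 6) ℝ :=
  Matrix.of fun I J => eps (p1 I) (p2 I) (p1 J) (p2 J)

/-- The wedge product `u ∧ v ∈ Λ⁴(ℝ⁴)*` of two 2-forms given by their
components in the basis `{dx^I : I ∈ O}`, as a multiple of the volume form. -/
def wedge6 (u v : Fin 6 → ℝ) : ℝ := u ⬝ᵥ (Bmat *ᵥ v)

/-- The components in the basis `{dx^I : I ∈ O}` of the wedge product
`a ∧ b` of two covectors `a, b ∈ (ℝ⁴)*`. -/
def wedgeVec (a b : Fin 4 → ℝ) : Fin 6 → ℝ :=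
  fun I => a (p1 I) * b (p2 I) - a (p2 I) * b (p1 I)

lemma pv1a : p1 0 = 0 := rfl
lemma pv1b : p1 1 = 0 := rfl
lemma pv1c : p1 2 = 0 := rfl
lemma pv1d : p1 3 = 2 := rfl
lemma pv1e : p1 4 = 3 := rfl
lemma pv1f : p1 5 = 1 := rfl
lemma pv2a : p2 0 = 1 := rfl
lemma pv2b : p2 1 = 2 := rfl
lemma pv2c : p2 2 = 3 := rfl
lemma pv2d : p2 3 = 3 := rfl
lemma pv2e : p2 4 = 1 := rfl
lemma pv2f : p2 5 = 2 := rfl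
lemma fva : ((0:Fin 4):ℕ) = 0 := rfl
lemma fvb : ((1:Fin 4):ℕ) = 1 := rfl
lemma fvc : ((2:Fin 4):ℕ) = 2 := rfl
lemma fvd : ((3:Fin 4):ℕ) = 3 := rfl

lemma wedge6_eq (u v : Fin 6 → ℝ) : wedge6 u v =
    u 0 * v 3 + u 1 * v 4 + u 2 * v 5 + u 3 * v 0 + u 4 * v 1 + u 5 * v 2 := by
  simp only [wedge6, Matrix.mulVec, dotProduct, Fin.sum_univ_six, Bmat, Matrix.of_apply,
    pv1a, pv1b, pv1c, pv1d, pv1e, pv1f, pv2a, pv2b, pv2c, pv2d, pv2e, pv2f,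
    eps, fva, fvb, fvc, fvd]
  push_cast
  ring

lemma Bmat03 : Bmat 0 3 = 1 := by
  simp only [Bmat, Matrix.of_apply, pv1a, pv2a, pv1d, pv2d, eps, fva, fvb, fvc, fvd]
  norm_num

lemma Bmat00 : Bmat 0 0 = 0 := by
  simp only [Bmat, Matrix.of_apply, pv1a, pv2a, eps, fva, fvb]
  norm_num

/-- Linear independence of a pair from a nonzero `2×2` minor. -/
lemma li_pair {a b : Fin 4 → ℝ} {i j : Fin 4} (h : a i * b j - a j * b i ≠ 0) :
    LinearIndependent ℝ ![a, b] := by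
  rw [LinearIndependent.pair_iff]
  intro s t hst
  have hi : s * a i + t * b i = 0 := by
    have := congrFun hst i
    simpa [Pi.add_apply, Pi.smul_apply, smul_eq_mul] using this
  have hj : s * a j + t * b j = 0 := by
    have := congrFun hst j
    simpa [Pi.add_apply, Pi.smul_apply, smul_eq_mul] using this
  constructor
  · have h2 : s * (a i * b j - a j * b i) = 0 := by linear_combination b j * hi - b i * hj
    exact (mul_eq_zero.mp h2).resolve_right h
  · have h2 : t * (a i * b j - a j * b i) = 0 := by linear_combination a i * hj - a j * hi
    exact (mul_eq_zero.mp h2).resolve_right h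


lemma funext6 {f g : Fin 6 → ℝ} (h0 : f 0 = g 0) (h1 : f 1 = g 1) (h2 : f 2 = g 2)
    (h3 : f 3 = g 3) (h4 : f 4 = g 4) (h5 : f 5 = g 5) : f = g := by
  funext J
  fin_cases J
  exacts [h0, h1, h2, h3, h4, h5]

/-- A 2-form with vanishing Pfaffian and a nonzero component is decomposable. -/
lemma decomp (u : Fin 6 → ℝ)
    (hPf : u 0 * u 3 + u 1 * u 4 + u 2 * u 5 = 0) (I : Fin 6) (hI : u I ≠ 0) :
    ∃ a b : Fin 4 → ℝ, LinearIndependent ℝ ![a, b] ∧ u = wedgeVec a b := by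
  fin_cases I
  · have hne : u 0 ≠ 0 := hI
    refine ⟨![0, u 0, u 1, u 2], ![-1, 0, u 5 / u 0, -(u 4 / u 0)], li_pair (i := 0) (j := 1) ?_, ?_⟩
    · simpa using hne
    · refine funext6 ?_ ?_ ?_ ?_ ?_ ?_ <;>
        simp only [wedgeVec, pv1a, pv1b, pv1c, pv1d, pv1e, pv1f,
          pv2a, pv2b, pv2c, pv2d, pv2e, pv2f, Matrix.cons_val_zero, Matrix.cons_val_one,
          Matrix.head_cons, Matrix.cons_val_two, Matrix.cons_val_three, Matrix.tail_cons] <;>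
        field_simp [hne] <;> first | ring1 | linear_combination hPf | linear_combination -hPf | linear_combination u 0 * hPf | linear_combination u 1 * hPf | linear_combination u 2 * hPf | linear_combination u 3 * hPf | linear_combination u 4 * hPf | linear_combination u 5 * hPf | linear_combination -u 0 * hPf | linear_combination -u 1 * hPf | linear_combination -u 2 * hPf | linear_combination -u 3 * hPf | linear_combination -u 4 * hPf | linear_combination -u 5 * hPf
  · have hne : u 1 ≠ 0 := hI
    refine ⟨![0, u 0, u 1, u 2], ![-1, -(u 5 / u 1), 0, u 3 / u 1], li_pair (i := 0) (j := 2) ?_, ?_⟩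
    · simpa using hne
    · refine funext6 ?_ ?_ ?_ ?_ ?_ ?_ <;>
        simp only [wedgeVec, pv1a, pv1b, pv1c, pv1d, pv1e, pv1f,
          pv2a, pv2b, pv2c, pv2d, pv2e, pv2f, Matrix.cons_val_zero, Matrix.cons_val_one,
          Matrix.head_cons, Matrix.cons_val_two, Matrix.cons_val_three, Matrix.tail_cons] <;>
        field_simp [hne] <;> first | ring1 | linear_combination hPf | linear_combination -hPf | linear_combination u 0 * hPf | linear_combination u 1 * hPf | linear_combination u 2 * hPf | linear_combination u 3 * hPf | linear_combination u 4 * hPf | linear_combination u 5 * hPf | linear_combination -u 0 * hPf | linear_combination -u 1 * hPf | linear_combination -u 2 * hPf | linear_combination -u 3 * hPf | linear_combination -u 4 * hPf | linear_combination -u 5 * hPf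
  · have hne : u 2 ≠ 0 := hI
    refine ⟨![0, u 0, u 1, u 2], ![-1, u 4 / u 2, -(u 3 / u 2), 0], li_pair (i := 0) (j := 3) ?_, ?_⟩
    · simpa using hne
    · refine funext6 ?_ ?_ ?_ ?_ ?_ ?_ <;>
        simp only [wedgeVec, pv1a, pv1b, pv1c, pv1d, pv1e, pv1f,
          pv2a, pv2b, pv2c, pv2d, pv2e, pv2f, Matrix.cons_val_zero, Matrix.cons_val_one,
          Matrix.head_cons, Matrix.cons_val_two, Matrix.cons_val_three, Matrix.tail_cons] <;>
        field_simp [hne] <;> first | ring1 | linear_combination hPf | linear_combination -hPf | linear_combination u 0 * hPf | linear_combination u 1 * hPf | linear_combination u 2 * hPf | linear_combination u 3 * hPf | linear_combination u 4 * hPf | linear_combination u 5 * hPf | linear_combination -u 0 * hPf | linear_combination -u 1 * hPf | linear_combination -u 2 * hPf | linear_combination -u 3 * hPf | linear_combination -u 4 * hPf | linear_combination -u 5 * hPf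
  · have hne : u 3 ≠ 0 := hI
    refine ⟨![-u 1, -u 5, 0, u 3], ![-(u 2 / u 3), u 4 / u 3, -1, 0],
      li_pair (i := 2) (j := 3) ?_, ?_⟩
    · simpa using hne
    · refine funext6 ?_ ?_ ?_ ?_ ?_ ?_ <;>
        simp only [wedgeVec, pv1a, pv1b, pv1c, pv1d, pv1e, pv1f,
          pv2a, pv2b, pv2c, pv2d, pv2e, pv2f, Matrix.cons_val_zero, Matrix.cons_val_one,
          Matrix.head_cons, Matrix.cons_val_two, Matrix.cons_val_three, Matrix.tail_cons] <;>
        field_simp [hne] <;> first | ring1 | linear_combination hPf | linear_combination -hPf | linear_combination u 0 * hPf | linear_combination u 1 * hPf | linear_combination u 2 * hPf | linear_combination u 3 * hPf | linear_combination u 4 * hPf | linear_combination u 5 * hPf | linear_combination -u 0 * hPf | linear_combination -u 1 * hPf | linear_combination -u 2 * hPf | linear_combination -u 3 * hPf | linear_combination -u 4 * hPf | linear_combination -u 5 * hPf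
  · have hne : u 4 ≠ 0 := hI
    refine ⟨![-u 2, u 4, -u 3, 0], ![-(u 0 / u 4), 0, u 5 / u 4, -1],
      li_pair (i := 3) (j := 1) ?_, ?_⟩
    · simpa using hne
    · refine funext6 ?_ ?_ ?_ ?_ ?_ ?_ <;>
        simp only [wedgeVec, pv1a, pv1b, pv1c, pv1d, pv1e, pv1f,
          pv2a, pv2b, pv2c, pv2d, pv2e, pv2f, Matrix.cons_val_zero, Matrix.cons_val_one,
          Matrix.head_cons, Matrix.cons_val_two, Matrix.cons_val_three, Matrix.tail_cons] <;>
        field_simp [hne] <;> first | ring1 | linear_combination hPf | linear_combination -hPf | linear_combination u 0 * hPf | linear_combination u 1 * hPf | linear_combination u 2 * hPf | linear_combination u 3 * hPf | linear_combination u 4 * hPf | linear_combination u 5 * hPf | linear_combination -u 0 * hPf | linear_combination -u 1 * hPf | linear_combination -u 2 * hPf | linear_combination -u 3 * hPf | linear_combination -u 4 * hPf | linear_combination -u 5 * hPf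
  · have hne : u 5 ≠ 0 := hI
    refine ⟨![-u 0, 0, u 5, -u 4], ![-(u 1 / u 5), -1, 0, u 3 / u 5],
      li_pair (i := 1) (j := 2) ?_, ?_⟩
    · simpa using hne
    · refine funext6 ?_ ?_ ?_ ?_ ?_ ?_ <;>
        simp only [wedgeVec, pv1a, pv1b, pv1c, pv1d, pv1e, pv1f,
          pv2a, pv2b, pv2c, pv2d, pv2e, pv2f, Matrix.cons_val_zero, Matrix.cons_val_one,
          Matrix.head_cons, Matrix.cons_val_two, Matrix.cons_val_three, Matrix.tail_cons] <;>
        field_simp [hne] <;> first | ring1 | linear_combination hPf | linear_combination -hPf | linear_combination u 0 * hPf | linear_combination u 1 * hPf | linear_combination u 2 * hPf | linear_combination u 3 * hPf | linear_combination u 4 * hPf | linear_combination u 5 * hPf | linear_combination -u 0 * hPf | linear_combination -u 1 * hPf | linear_combination -u 2 * hPf | linear_combination -u 3 * hPf | linear_combination -u 4 * hPf | linear_combination -u 5 * hPf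

/-- If 2-forms `T^I`, `I ∈ O`, satisfy `T^I ∧ T^J = ε^{IJ} ω` for a nonzero
4-form `ω`, then `T^{01} = ξ⁰ ∧ ξ¹` for some linearly independent covectors
`ξ⁰, ξ¹`.  (2-forms are represented by their components in the basis `{dx^I}`
and the 4-form `ω = c · dx⁰∧dx¹∧dx²∧dx³` by the scalar `c ≠ 0`.) -/
theorem T01_decomposable (T : Fin 6 → Fin 6 → ℝ) (c : ℝ) (hc : c ≠ 0)
    (hT : ∀ I J : Fin 6, wedge6 (T I) (T J) = Bmat I J * c) :
    ∃ a b : Fin 4 → ℝ, LinearIndependent ℝ ![a, b] ∧ T 0 = wedgeVec a b := by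
  have h00 := hT 0 0
  rw [wedge6_eq, Bmat00, zero_mul] at h00
  have hPf : T 0 0 * T 0 3 + T 0 1 * T 0 4 + T 0 2 * T 0 5 = 0 := by linarith
  have hne : ∃ I : Fin 6, T 0 I ≠ 0 := by
    by_contra h
    push_neg at h
    have h03 := hT 0 3
    rw [wedge6_eq, Bmat03, one_mul] at h03
    rw [h 0, h 1, h 2, h 3, h 4, h 5] at h03
    simp at h03
    exact hc h03.symm
  obtain ⟨I, hI⟩ := hne
  exact decomp (T 0) hPf I hI
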